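/- Let n, s be integers with n ≥ 2 and 1 ≤ s ≤ n−2, let M be a multiset of n natural numbers, and let A(M) be the set of all permutations of M. If gcd(s, n) = 1, then there exists an s-overlap cycle for A(M). -/

import Mathlib

/-- `A(M)`: the set of all permutations of the multiset `M`, i.e. the words whose
multiset of letters is `M`. -/
def multisetPerms (M : Multiset ℕ) : Set (List ℕ) :=
  {w | (w : Multiset ℕ) = M}

/-- `IsOCycle s N C f` says `f 0, f 1, …, f (N-1)` is an `s`-overlap cycle for the
set `C` of strings: it is a cyclic ordering of all elements of `C` (each occurring
exactly once) in which the last `s` letters of each word equal the first `s`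
letters of the cyclically next word. -/
def IsOCycle (s N : ℕ) (C : Set (List ℕ)) (f : ℕ → List ℕ) : Prop :=
  (∀ i < N, f i ∈ C) ∧
    (∀ c ∈ C, ∃! i, i < N ∧ f i = c) ∧
    ∀ i < N, (f i).drop ((f i).length - s) = (f ((i + 1) % N)).take s

/-! Rotating a word `w` of length `n` by `n - s` places its last `s` letters in front, so `w`
`s`-overlaps the rotated word; since `gcd(n - s, n) = 1`, the orbit of `w` under this rotation is
its whole rotation class. Hence `A(M)` splits into disjoint `s`-ocycles, one per rotation class.
Two disjoint cycles containing words `w`, `u` with the same last `s` letters merge into one by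
exchanging the successors of `w` and `u`. Rotating an adjacent transposition `t x y z ↔ t y x z`
to the front gives words `x y v`, `y x v` that share their last `s ≤ n - 2` letters, and adjacent
transpositions connect `A(M)`; so merging until nothing is left outside gives one `s`-ocycle. -/

open Function

namespace List

variable {α : Type*}

theorem iterate_rotate (k m : ℕ) (l : List α) :
    (fun l : List α => l.rotate k)^[m] l = l.rotate (m * k) := by
  induction m with
  | zero => simp
  | succ m ih => rw [iterate_succ_apply', ih, rotate_rotate, Nat.succ_mul]

theorem mem_periodicPts_rotate (k : ℕ) :
    ∀ l : List α, l ∈ periodicPts (fun l : List α => l.rotate k)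
  | [] => mk_mem_periodicPts Nat.one_pos rfl
  | a :: l => mk_mem_periodicPts (Nat.succ_pos l.length) <| by
      rw [IsPeriodicPt, IsFixedPt, iterate_rotate]
      exact rotate_length_mul (a :: l) k

theorem exists_iterate_rotate_eq_rotate {l : List α} {k : ℕ} (hk : k.Coprime l.length)
    (j : ℕ) :
    ∃ m, (fun l : List α => l.rotate k)^[m] l = l.rotate j := by
  rcases eq_or_ne l.length 0 with hl | hl
  · exact ⟨0, by simp [length_eq_zero_iff.mp hl]⟩
  obtain ⟨m, -, hm⟩ := Nat.exists_mul_mod_eq_of_coprime j hk hl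
  exact ⟨m, by rw [iterate_rotate, ← rotate_mod, mul_comm, hm, rotate_mod]⟩

theorem Perm.exists_swap_mem_notMem {l₁ l₂ : List α} (h : l₁ ~ l₂) {S : Set (List α)}
    (h₁ : l₁ ∈ S) (h₂ : l₂ ∉ S) :
    ∃ t x y z, t ++ x :: y :: z ∈ S ∧ t ++ y :: x :: z ∉ S := by
  induction h generalizing S with
  | nil => exact absurd h₁ h₂
  | cons a _ ih =>
    obtain ⟨t, x, y, z, hS, hS'⟩ := ih (S := {l | a :: l ∈ S}) h₁ h₂
    exact ⟨a :: t, x, y, z, hS, hS'⟩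
  | swap x y l => exact ⟨[], y, x, l, h₁, h₂⟩
  | @trans _ l _ _ _ ih₁ ih₂ =>
    by_cases hmid : l ∈ S
    exacts [ih₂ hmid h₂, ih₁ h₁ hmid]

end List

namespace Cycle

variable {α : Type*}

theorem exists_eq_cons_of_mem {c : Cycle α} {a : α} (ha : a ∈ c) :
    ∃ l : List α, c = ↑(a :: l) := by
  induction c using Quotient.inductionOn with
  | h l =>
    obtain ⟨t₁, t₂, rfl⟩ := List.append_of_mem (mem_coe_iff.mp ha)
    exact ⟨t₂ ++ t₁, coe_eq_coe.mpr ⟨t₁.length, by simp⟩⟩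

theorem chain_coe_iff_getElem {R : α → α → Prop} {l : List α} :
    Chain R (l : Cycle α) ↔
      ∀ i (hi : i < l.length), R l[i] (l[(i + 1) % l.length]'(Nat.mod_lt _ (by omega))) := by
  rcases l with - | ⟨a, l⟩
  · simp
  have hget : ∀ j (hj : j ≤ l.length + 1), (a :: (l ++ [a]))[j]'(by simp; omega) =
      (a :: l)[j % (l.length + 1)]'(Nat.mod_lt _ (by omega)) := by
    intro j hj
    rcases Nat.lt_or_ge j (l.length + 1) with hj' | hj'
    · simp only [Nat.mod_eq_of_lt hj', ← List.cons_append]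
      exact List.getElem_append_left hj'
    · obtain rfl : j = l.length + 1 := by omega
      simp
  rw [chain_coe_cons, List.isChain_iff_getElem]
  simp only [List.length_cons, List.length_append, List.length_nil, Nat.add_lt_add_iff_right]
  refine forall_congr' fun i => forall_congr' fun hi => ?_
  rw [hget i hi.le, hget (i + 1) hi]
  simp only [Nat.mod_eq_of_lt hi]

end Cycle

theorem Function.mem_of_mem_periodicOrbit {α : Type*} {f : α → α} {S : Set α} {x y : α}
    (hS : Set.MapsTo f S S) (hx : x ∈ periodicPts f) (hy : y ∈ periodicOrbit f x)
    (hyS : y ∈ S) : x ∈ S := by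
  obtain ⟨n, rfl⟩ := (mem_periodicOrbit_iff hx).mp hy
  have hp := minimalPeriod_pos_of_mem_periodicPts hx
  have hback : f^[(minimalPeriod f x - 1) * n] (f^[n] x) = x := by
    rw [← iterate_add_apply, ← Nat.add_one_mul, Nat.sub_add_cancel hp]
    exact (isPeriodicPt_minimalPeriod f x).mul_const n
  exact hback ▸ hS.iterate _ hyS

section CycleJoining

variable {α : Type*} {f : α → α} {R : α → α → Prop} {C : Finset α}

structure IsInvariantChain (f : α → α) (R : α → α → Prop) (C : Finset α) (c : Cycle α) :
    Prop where
  nodup : c.Nodup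
  chain : c.Chain R
  subset : ∀ x ∈ c, x ∈ C
  apply_mem : ∀ x ∈ c, f x ∈ c

theorem isInvariantChain_nil : IsInvariantChain f R C Cycle.nil :=
  ⟨Cycle.nodup_nil, Cycle.Chain.nil R, by simp, by simp⟩

theorem isInvariantChain_periodicOrbit (hC : Set.MapsTo f C C) (hR : ∀ x ∈ C, R x (f x))
    {x : α} (hxC : x ∈ C) (hx : x ∈ periodicPts f) :
    IsInvariantChain f R C (periodicOrbit f x) where
  nodup := nodup_periodicOrbit
  chain := (periodicOrbit_chain' R hx).mpr fun n =>
    iterate_succ_apply' f n x ▸ hR _ (hC.iterate n hxC)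
  subset y hy := by
    obtain ⟨n, rfl⟩ := (mem_periodicOrbit_iff hx).mp hy
    exact hC.iterate n hxC
  apply_mem y hy := by
    obtain ⟨n, rfl⟩ := (mem_periodicOrbit_iff hx).mp hy
    rw [← iterate_succ_apply' f n x]
    exact iterate_mem_periodicOrbit hx _

theorem IsInvariantChain.length_le {c : Cycle α} (hc : IsInvariantChain f R C c) :
    c.length ≤ C.card := by
  classical
  induction c using Quotient.inductionOn' with | h l => ?_
  change (l : Cycle α).length ≤ C.card
  rw [Cycle.length_coe, ← List.toFinset_card_of_nodup (Cycle.nodup_coe_iff.mp hc.nodup)]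
  exact Finset.card_le_card fun x hx =>
    hc.subset x (Cycle.mem_coe_iff.mpr (List.mem_toFinset.mp hx))

/-- The joined cycle is `w → (d after u) → u → (c after w) → w`. -/
theorem IsInvariantChain.join {c d : Cycle α} (hc : IsInvariantChain f R C c)
    (hd : IsInvariantChain f R C d) (hdisj : ∀ x ∈ c, x ∉ d) {w u : α} (hw : w ∈ c)
    (hu : u ∈ d) (hwu : ∀ z, R w z ↔ R u z) :
    ∃ e, IsInvariantChain f R C e ∧ e.length = c.length + d.length := by
  obtain ⟨l₁, rfl⟩ := Cycle.exists_eq_cons_of_mem hw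
  obtain ⟨l₂, rfl⟩ := Cycle.exists_eq_cons_of_mem hu
  have hperm : (w :: (l₂ ++ u :: l₁)).Perm ((w :: l₁) ++ (u :: l₂)) :=
    (List.perm_append_comm.trans List.perm_middle.symm).cons w
  have hmem : ∀ x, x ∈ (↑(w :: (l₂ ++ u :: l₁)) : Cycle α) ↔
      x ∈ (↑(w :: l₁) : Cycle α) ∨ x ∈ (↑(u :: l₂) : Cycle α) := fun x => by
    simp only [Cycle.mem_coe_iff, ← List.mem_append, hperm.mem_iff]
  refine ⟨↑(w :: (l₂ ++ u :: l₁)), ⟨?_, ?_, ?_, ?_⟩, ?_⟩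
  · rw [Cycle.nodup_coe_iff, hperm.nodup_iff, List.nodup_append]
    exact ⟨Cycle.nodup_coe_iff.mp hc.nodup, Cycle.nodup_coe_iff.mp hd.nodup,
      fun x hx y hy hxy => hdisj x (Cycle.mem_coe_iff.mpr hx) (hxy ▸ Cycle.mem_coe_iff.mpr hy)⟩
  · have h₁ := hc.chain
    have h₂ := hd.chain
    rw [Cycle.chain_coe_cons] at h₁ h₂ ⊢
    rw [List.append_assoc, List.cons_append, List.isChain_cons_split]
    exact ⟨h₂.imp_head (hwu _).mpr, h₁.imp_head (hwu _).mp⟩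
  · intro x hx
    rcases (hmem x).mp hx with h | h
    exacts [hc.subset x h, hd.subset x h]
  · intro x hx
    rw [hmem] at hx ⊢
    exact hx.imp (hc.apply_mem x) (hd.apply_mem x)
  · simp only [Cycle.length_coe, hperm.length_eq, List.length_append]

theorem IsInvariantChain.exists_length_lt (hC : Set.MapsTo f C C)
    (hper : ∀ x ∈ C, x ∈ periodicPts f) (hR : ∀ x ∈ C, R x (f x))
    (hconn : ∀ S : Set α, S ⊆ C → Set.MapsTo f S S → ∀ x ∈ S, ∀ y ∈ C, y ∉ S →
      ∃ w ∈ S, ∃ u ∈ C, u ∉ S ∧ ∀ z, R w z ↔ R u z)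
    {c : Cycle α} (hc : IsInvariantChain f R C c) {y : α} (hyC : y ∈ C) (hyc : y ∉ c) :
    ∃ e, IsInvariantChain f R C e ∧ c.length < e.length := by
  have horbit : ∀ u ∈ C, 0 < (periodicOrbit f u).length := fun u hu => by
    rw [periodicOrbit_length]
    exact minimalPeriod_pos_of_mem_periodicPts (hper u hu)
  by_cases hne : ∃ x, x ∈ c
  · obtain ⟨x, hx⟩ := hne
    have hcf : Set.MapsTo f {x | x ∈ c} {x | x ∈ c} := fun x hx => hc.apply_mem x hx
    obtain ⟨w, hw, u, huC, huc, hwu⟩ :=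
      hconn {x | x ∈ c} (fun x hx => hc.subset x hx) hcf x hx y hyC hyc
    have hu := hper u huC
    obtain ⟨e, he, hlen⟩ := hc.join (isInvariantChain_periodicOrbit hC hR huC hu)
      (fun x hx hxd => huc (mem_of_mem_periodicOrbit hcf hu hxd hx))
      hw (self_mem_periodicOrbit hu) hwu
    exact ⟨e, he, by have := horbit u huC; omega⟩
  · have hnil : c = Cycle.nil := by
      induction c using Cycle.induction_on with
      | nil => rfl
      | cons a l _ => exact absurd (Cycle.mem_coe_iff.mpr List.mem_cons_self) (not_exists.mp hne a)
    subst hnil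
    exact ⟨_, isInvariantChain_periodicOrbit hC hR hyC (hper y hyC), horbit y hyC⟩

theorem exists_spanning_chain_cycle (hC : Set.MapsTo f C C)
    (hper : ∀ x ∈ C, x ∈ periodicPts f) (hR : ∀ x ∈ C, R x (f x))
    (hconn : ∀ S : Set α, S ⊆ C → Set.MapsTo f S S → ∀ x ∈ S, ∀ y ∈ C, y ∉ S →
      ∃ w ∈ S, ∃ u ∈ C, u ∉ S ∧ ∀ z, R w z ↔ R u z) :
    ∃ c : Cycle α, c.Nodup ∧ c.Chain R ∧ ∀ x, x ∈ c ↔ x ∈ C := by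
  set lengths := {m | ∃ c, IsInvariantChain f R C c ∧ c.length = m}
  have hbdd : BddAbove lengths := ⟨C.card, by rintro _ ⟨c, hc, rfl⟩; exact hc.length_le⟩
  obtain ⟨c, hc, hlen⟩ : sSup lengths ∈ lengths :=
    Nat.sSup_mem ⟨0, Cycle.nil, isInvariantChain_nil, rfl⟩ hbdd
  refine ⟨c, hc.nodup, hc.chain, fun x => ⟨hc.subset x, fun hxC => ?_⟩⟩
  by_contra hxc
  obtain ⟨e, he, hlt⟩ := hc.exists_length_lt hC hper hR hconn hxC hxc
  have := le_csSup hbdd ⟨e, he, rfl⟩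
  omega

end CycleJoining

def Overlap {α : Type*} (s : ℕ) (w u : List α) : Prop :=
  w.drop (w.length - s) = u.take s

theorem overlap_rotate_length_sub {α : Type*} {s : ℕ} {w : List α} (hs : s ≤ w.length) :
    Overlap s w (w.rotate (w.length - s)) := by
  rw [Overlap, List.rotate_eq_drop_append_take (Nat.sub_le _ _), List.take_left' (by simp; omega)]

theorem exists_isOCycle_of_cycle {s : ℕ} {C : Set (List ℕ)} {c : Cycle (List ℕ)}
    (hnd : c.Nodup) (hch : c.Chain (Overlap s)) (hmem : ∀ w, w ∈ c ↔ w ∈ C) :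
    ∃ f, IsOCycle s (Nat.card C) C f := by
  obtain ⟨l, rfl⟩ := Quot.exists_rep c
  have hl : l.Nodup := Cycle.nodup_coe_iff.mp hnd
  have hlC : ∀ w, w ∈ l ↔ w ∈ C := fun w => Cycle.mem_coe_iff.symm.trans (hmem w)
  have hcard : Nat.card C = l.length := by
    rw [show C = ↑l.toFinset by ext w; simp [hlC], Nat.card_coe_set_eq, Set.ncard_coe_finset,
      List.toFinset_card_of_nodup hl]
  have hget : ∀ i (hi : i < l.length), l.getD i [] = l[i] := fun i hi =>
    List.getD_eq_getElem _ _ hi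
  refine ⟨fun i => l.getD i [], fun i hi => ?_, fun w hw => ?_, fun i hi => ?_⟩
  · rw [hcard] at hi
    change l.getD i [] ∈ C
    rw [hget i hi, ← hlC]
    exact List.getElem_mem hi
  · obtain ⟨i, hi, rfl⟩ := List.mem_iff_getElem.mp ((hlC w).mpr hw)
    refine ⟨i, ⟨hcard ▸ hi, hget i hi⟩, fun j ⟨hj, hji⟩ => ?_⟩
    rw [hcard] at hj
    exact hl.getElem_inj_iff.mp ((hget j hj).symm.trans hji)
  · rw [hcard] at hi ⊢
    have hi' : (i + 1) % l.length < l.length := Nat.mod_lt _ (by omega)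
    change Overlap s (l.getD i []) (l.getD ((i + 1) % l.length) [])
    rw [hget i hi, hget _ hi']
    exact Cycle.chain_coe_iff_getElem.mp hch i hi

theorem List.Perm.exists_drop_eq_of_rotate_mem {α : Type*} {S : Set (List α)}
    (hS : ∀ w ∈ S, ∀ j, w.rotate j ∈ S) {s : ℕ} (hs : ∀ w ∈ S, s ≤ w.length - 2)
    {x y : List α} (hxy : x.Perm y) (hx : x ∈ S) (hy : y ∉ S) :
    ∃ w ∈ S, ∃ u, u.Perm w ∧ u ∉ S ∧ w.drop (w.length - s) = u.drop (u.length - s) := by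
  obtain ⟨t, a, b, z, hab, hba⟩ := hxy.exists_swap_mem_notMem hx hy
  have hw : a :: b :: (z ++ t) ∈ S := by simpa using hS _ hab t.length
  have hu : b :: a :: (z ++ t) ∉ S := fun hu => hba (by simpa using hS _ hu (z.length + 2))
  have hzt : s ≤ z.length + t.length := by have := hs _ hw; simp at this; omega
  refine ⟨_, hw, _, List.Perm.swap a b _, hu, ?_⟩
  rw [show (a :: b :: (z ++ t)).length - s = (z ++ t).length - s + 2 by simp; omega,
    show (b :: a :: (z ++ t)).length - s = (z ++ t).length - s + 2 by simp; omega]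
  rfl

theorem List.Perm.exists_overlap_iff_of_mapsTo_rotate {α : Type*} {n s : ℕ} (hs : s ≤ n - 2)
    (hcop : (n - s).Coprime n) {S : Set (List α)} (hlen : ∀ w ∈ S, w.length = n)
    (hS : Set.MapsTo (fun w : List α => w.rotate (n - s)) S S) {x y : List α} (hxy : x.Perm y)
    (hx : x ∈ S) (hy : y ∉ S) :
    ∃ w ∈ S, ∃ u, u.Perm w ∧ u ∉ S ∧ ∀ z, Overlap s w z ↔ Overlap s u z := by
  have hrot : ∀ w ∈ S, ∀ j, w.rotate j ∈ S := fun w hw j => by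
    obtain ⟨m, hm⟩ := List.exists_iterate_rotate_eq_rotate (k := n - s) (by rwa [hlen w hw]) j
    exact hm ▸ hS.iterate m hw
  obtain ⟨w, hw, u, huw, huS, hdrop⟩ :=
    hxy.exists_drop_eq_of_rotate_mem hrot (fun w hw => hlen w hw ▸ hs) hx hy
  exact ⟨w, hw, u, huw, huS, fun z => by rw [Overlap, Overlap, hdrop]⟩

theorem exists_ocycle_multisetPerms_general (n s : ℕ) (hs2 : s ≤ n - 2) (M : Multiset ℕ)
    (hM : Multiset.card M = n) (hgcd : Nat.gcd s n = 1) :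
    ∃ f : ℕ → List ℕ, IsOCycle s (Nat.card (multisetPerms M)) (multisetPerms M) f := by
  set C := M.lists.toFinset
  have hmemC : ∀ w, w ∈ C ↔ (w : Multiset ℕ) = M := by simp [C, eq_comm]
  have hlen : ∀ w ∈ C, w.length = n := fun w hw => by
    rw [← hM, ← (hmemC w).mp hw, Multiset.coe_card]
  have hperm : ∀ w ∈ C, ∀ u, u.Perm w → u ∈ C := fun w hw u hu => by
    rwa [hmemC, Multiset.coe_eq_coe.mpr hu, ← hmemC]
  have hcop : (n - s).Coprime n := (Nat.coprime_self_sub_left (by omega)).mpr hgcd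
  obtain ⟨c, hnd, hch, hmem⟩ := exists_spanning_chain_cycle (C := C) (R := Overlap s)
    (f := fun w => w.rotate (n - s))
    (fun w hw => hperm w hw _ (List.rotate_perm w _))
    (fun w _ => List.mem_periodicPts_rotate _ w)
    (fun w hw => hlen w hw ▸ overlap_rotate_length_sub (by rw [hlen w hw]; omega))
    (fun S hSC hS x hx y hyC hy => by
      have hxy : x.Perm y := Multiset.coe_eq_coe.mp
        (((hmemC x).mp (hSC hx)).trans ((hmemC y).mp hyC).symm)
      obtain ⟨w, hw, u, huw, huS, hwu⟩ := hxy.exists_overlap_iff_of_mapsTo_rotate hs2 hcop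
        (fun w hw => hlen w (hSC hw)) hS hx hy
      exact ⟨w, hw, u, hperm w (hSC hw) u huw, huS, hwu⟩)
  exact exists_isOCycle_of_cycle hnd hch fun w => (hmem w).trans (hmemC w)

/-- For `n ≥ 2`, `1 ≤ s ≤ n - 2` with `gcd(s,n) = 1`, and any multiset `M` of `n`
natural numbers, there exists an `s`-overlap cycle for `A(M)`. -/
theorem exists_ocycle_multisetPerms (n s : ℕ) (hn : 2 ≤ n) (hs1 : 1 ≤ s)
    (hs2 : s ≤ n - 2) (M : Multiset ℕ) (hM : Multiset.card M = n)
    (hgcd : Nat.gcd s n = 1) :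
    ∃ f : ℕ → List ℕ, IsOCycle s (Nat.card (multisetPerms M)) (multisetPerms M) f :=
  exists_ocycle_multisetPerms_general n s hs2 M hM hgcd
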